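/- Fix τ ∈ ℕ. There is a constant C_τ such that for every α ∈ [0,1) and every n ∈ ℕ there exists an element w_n = Σ_{f ∈ P_τ*} c_f √f with integer coefficients satisfying |c_f| ≤ n, such that 0 ≤ α − {w_n} ≤ C_τ · n^{-(2^τ − 1)}, where {x} denotes the fractional part of x. -/

import Mathlib

/-!
The numbers `√f`, `f` a squarefree divisor of `p₁ ⋯ p_τ`, are linearly independent over `ℚ`:
by induction along the tower `ℚ(√p₁, …, √p_k)`, since `√m ∉ ℚ(√p : p ∈ P)` as soon as some prime
outside `P` divides `m` to an odd power. Hence, for a nonzero integer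
vector `c` with entries at most `N`, the product of the `2 ^ τ` conjugates `∑ ± c_f √f` of
`w = ∑ c_f √f` is a nonzero integer while every conjugate is `O(N)`, so `|w| ≫ N ^ -(2 ^ τ - 1)`.
Together with Dirichlet's pigeonhole principle this gives, for `N = 2 ^ j`, elements `x_j` of
height `2 ^ j` whose fractional parts `θ_j` are of exact order `2 ^ (-j (2 ^ τ - 1))`. Expanding
`α` greedily as `∑ m_j θ_j` the digits `m_j` stay bounded, and stopping at `2 ^ J ≍ n` gives `w_n`.
-/

/-- The `i`-th prime (0-indexed: `nthPrime 0 = 2`). -/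
noncomputable def nthPrime (i : ℕ) : ℕ := Nat.nth Nat.Prime i

/-- The squarefree divisor of `p_1 ⋯ p_τ` indexed by `s ∈ {0,1}^τ`. -/
noncomputable def sqfDiv (τ : ℕ) (s : Fin τ → Bool) : ℕ :=
  ∏ j, if s j then nthPrime j else 1

theorem exists_add_mul_of_mem_closure_insert {F : Type*} [Field F] {S : Set F} {y x : F}
    (hy : y ^ 2 ∈ Subfield.closure S) (hx : x ∈ Subfield.closure (insert y S)) :
    ∃ a ∈ Subfield.closure S, ∃ b ∈ Subfield.closure S, x = a + b * y := by
  set K := Subfield.closure S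
  by_cases hyK : y ∈ K
  · refine ⟨x, ?_, 0, K.zero_mem, by ring⟩
    exact Subfield.closure_le.2 (Set.insert_subset hyK Subfield.subset_closure) hx
  let T : Subfield F :=
    { carrier := {x | ∃ a ∈ K, ∃ b ∈ K, x = a + b * y}
      zero_mem' := ⟨0, K.zero_mem, 0, K.zero_mem, by ring⟩
      one_mem' := ⟨1, K.one_mem, 0, K.zero_mem, by ring⟩
      add_mem' := by
        rintro _ _ ⟨a, ha, b, hb, rfl⟩ ⟨c, hc, d, hd, rfl⟩
        exact ⟨a + c, K.add_mem ha hc, b + d, K.add_mem hb hd, by ring⟩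
      neg_mem' := by
        rintro _ ⟨a, ha, b, hb, rfl⟩
        exact ⟨-a, K.neg_mem ha, -b, K.neg_mem hb, by ring⟩
      mul_mem' := by
        rintro _ _ ⟨a, ha, b, hb, rfl⟩ ⟨c, hc, d, hd, rfl⟩
        refine ⟨a * c + b * d * y ^ 2, ?_, a * d + b * c, ?_, by ring⟩
        · exact K.add_mem (K.mul_mem ha hc) (K.mul_mem (K.mul_mem hb hd) hy)
        · exact K.add_mem (K.mul_mem ha hd) (K.mul_mem hb hc)
      inv_mem' := by
        rintro _ ⟨a, ha, b, hb, rfl⟩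
        by_cases hx0 : a + b * y = 0
        · exact ⟨0, K.zero_mem, 0, K.zero_mem, by simp [hx0]⟩
        -- the norm `a ^ 2 - b ^ 2 * y ^ 2` vanishes only if `y = a / b ∈ K`
        have hd : a ^ 2 - b ^ 2 * y ^ 2 ≠ 0 := by
          intro hd
          have hb0 : b ≠ 0 := by rintro rfl; simp_all
          have hconj : a - b * y = 0 := by
            have : (a + b * y) * (a - b * y) = 0 := by linear_combination hd
            exact (mul_eq_zero.1 this).resolve_left hx0
          refine hyK ?_
          rw [show y = a / b by field_simp; linear_combination -hconj]
          exact K.div_mem ha hb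
        refine ⟨a / (a ^ 2 - b ^ 2 * y ^ 2), K.div_mem ha ?_, -b / (a ^ 2 - b ^ 2 * y ^ 2),
          K.div_mem (K.neg_mem hb) ?_, ?_⟩
        · exact K.sub_mem (K.pow_mem ha 2) (K.mul_mem (K.pow_mem hb 2) hy)
        · exact K.sub_mem (K.pow_mem ha 2) (K.mul_mem (K.pow_mem hb 2) hy)
        · refine inv_eq_of_mul_eq_one_right ?_
          field_simp
          ring }
  have hST : insert y S ⊆ T := Set.insert_subset
    (show y ∈ T from ⟨0, K.zero_mem, 1, K.one_mem, by ring⟩)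
    fun s hs => show s ∈ T from ⟨s, Subfield.subset_closure hs, 0, K.zero_mem, by ring⟩
  exact Subfield.closure_le.2 hST hx

theorem not_isSquare_of_odd_padicValNat {m q : ℕ} [Fact q.Prime] (h : Odd (padicValNat q m)) :
    ¬IsSquare m := by
  rintro ⟨t, rfl⟩
  have ht : t ≠ 0 := by rintro rfl; simp at h
  rw [padicValNat.mul ht ht, ← two_mul] at h
  exact Nat.not_even_iff_odd.2 h (even_two_mul _)

theorem sqrt_notMem_closure_sqrt_primes (P : Finset ℕ) (hP : ∀ p ∈ P, p.Prime) {m q : ℕ}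
    (hq : q.Prime) (hqm : Odd (padicValNat q m)) (hqP : q ∉ P) :
    √(m : ℝ) ∉ Subfield.closure ((fun p : ℕ => √(p : ℝ)) '' P) := by
  induction P using Finset.induction_on generalizing m q with
  | empty =>
    intro hmem
    have := Fact.mk hq
    have hrat : Subfield.closure ((fun p : ℕ => √(p : ℝ)) '' (∅ : Finset ℕ)) ≤
        (Rat.castHom ℝ).fieldRange := Subfield.closure_le.2 (by simp)
    obtain ⟨r, hr⟩ := hrat hmem
    exact irrational_sqrt_natCast_iff.2 (not_isSquare_of_odd_padicValNat hqm) ⟨r, hr⟩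
  | insert p P hpP ih =>
    intro hmem
    simp only [Finset.mem_insert, not_or, forall_eq_or_imp] at hP hqP
    obtain ⟨hp, hP⟩ := hP
    obtain ⟨hqp, hqP⟩ := hqP
    have := Fact.mk hp
    have := Fact.mk hq
    set K := Subfield.closure ((fun p : ℕ => √(p : ℝ)) '' P)
    have hsqp : √(p : ℝ) ^ 2 = p := Real.sq_sqrt (Nat.cast_nonneg p)
    have hpK : √(p : ℝ) ∉ K := ih hP hp (by simp) hpP
    rw [Finset.coe_insert, Set.image_insert_eq] at hmem
    obtain ⟨a, ha, b, hb, hab⟩ := exists_add_mul_of_mem_closure_insert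
      (by rw [hsqp]; exact natCast_mem K p) hmem
    -- square `√m = a + b √p`: unless `a = 0` or `b = 0`, this puts `√p` into `K`
    by_cases hb0 : b = 0
    · exact ih hP hq hqm hqP (by simpa [hb0, hab] using ha)
    by_cases ha0 : a = 0
    · have hm0 : m ≠ 0 := by rintro rfl; simp at hqm
      refine ih hP (m := m * p) hq ?_ hqP ?_
      · rwa [padicValNat.mul hm0 hp.ne_zero, padicValNat_primes hqp, add_zero]
      · rw [Nat.cast_mul, Real.sqrt_mul (Nat.cast_nonneg m), hab, ha0, zero_add, mul_assoc, ← sq,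
          hsqp]
        exact K.mul_mem hb (natCast_mem K p)
    · refine hpK ?_
      have hsqm : (m : ℝ) = a ^ 2 + b ^ 2 * p + 2 * a * b * √(p : ℝ) := by
        rw [← Real.sq_sqrt (Nat.cast_nonneg m), hab]
        linear_combination b ^ 2 * hsqp
      rw [show √(p : ℝ) = (m - a ^ 2 - b ^ 2 * p) / (2 * a * b) by
        field_simp; linear_combination -hsqm]
      refine K.div_mem (K.sub_mem (K.sub_mem (natCast_mem K m) (K.pow_mem ha 2))
        (K.mul_mem (K.pow_mem hb 2) (natCast_mem K p))) (K.mul_mem (K.mul_mem ?_ ha) hb)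
      exact_mod_cast natCast_mem K 2

@[to_additive]
theorem Fin.prod_bool_tuple_succ {M : Type*} [CommMonoid M] {n : ℕ} (f : (Fin (n + 1) → Bool) → M) :
    ∏ s, f s = ∏ t, f (Fin.snoc t false) * f (Fin.snoc t true) := by
  rw [← (Fin.snocEquiv fun _ => Bool).prod_comp, Fintype.prod_prod_type_right]
  refine Finset.prod_congr rfl fun t _ => ?_
  rw [Fintype.prod_bool, mul_comm]
  rfl

theorem nthPrime_prime (i : ℕ) : (nthPrime i).Prime := Nat.prime_nth_prime i

theorem nthPrime_injective : Function.Injective nthPrime :=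
  Nat.nth_injective Nat.infinite_setOfPred_prime

section Tuples

variable {τ : ℕ}

theorem sqfDiv_snoc (t : Fin τ → Bool) (b : Bool) :
    sqfDiv (τ + 1) (Fin.snoc t b) = sqfDiv τ t * if b then nthPrime τ else 1 := by
  simp [sqfDiv, Fin.prod_univ_castSucc]

theorem sqrt_sqfDiv_snoc (t : Fin τ → Bool) (b : Bool) :
    √(sqfDiv (τ + 1) (Fin.snoc t b) : ℝ) =
      √(sqfDiv τ t : ℝ) * if b then √(nthPrime τ : ℝ) else 1 := by
  rw [sqfDiv_snoc, Nat.cast_mul, Real.sqrt_mul (Nat.cast_nonneg _)]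
  cases b <;> simp

variable (τ) in
noncomputable def primeSqrtField : Subfield ℝ :=
  Subfield.closure ((fun p : ℕ => √(p : ℝ)) '' ((Finset.range τ).image nthPrime : Finset ℕ))

theorem primeSqrtField_mono {τ τ' : ℕ} (h : τ ≤ τ') : primeSqrtField τ ≤ primeSqrtField τ' := by
  refine Subfield.closure_mono (Set.image_mono ?_)
  intro p
  simp only [Finset.coe_image, Finset.coe_range, Set.mem_image, Set.mem_Iio]
  exact fun ⟨j, hj, hjp⟩ => ⟨j, hj.trans_le h, hjp⟩

theorem sqrt_nthPrime_mem_primeSqrtField {j τ : ℕ} (h : j < τ) :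
    √(nthPrime j : ℝ) ∈ primeSqrtField τ :=
  Subfield.subset_closure ⟨nthPrime j, by simpa using ⟨j, h, rfl⟩, rfl⟩

variable (τ) in
theorem sqrt_nthPrime_notMem_primeSqrtField : √(nthPrime τ : ℝ) ∉ primeSqrtField τ :=
  sqrt_notMem_closure_sqrt_primes _ (by simp [nthPrime_prime]) (nthPrime_prime τ)
    (by simp [padicValNat.self (nthPrime_prime τ).one_lt]) (by simp [nthPrime_injective.eq_iff])

theorem sqrt_sqfDiv_mem_primeSqrtField (s : Fin τ → Bool) :
    √(sqfDiv τ s : ℝ) ∈ primeSqrtField τ := by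
  induction τ with
  | zero => simp [sqfDiv, one_mem]
  | succ τ ih =>
    rw [← Fin.snoc_init_self s, sqrt_sqfDiv_snoc]
    refine mul_mem (primeSqrtField_mono τ.le_succ (ih _)) ?_
    split_ifs
    · exact sqrt_nthPrime_mem_primeSqrtField τ.lt_succ_self
    · exact one_mem _

variable (τ) in
theorem linearIndependent_sqrt_sqfDiv :
    LinearIndependent ℚ fun s : Fin τ → Bool => √(sqfDiv τ s : ℝ) := by
  rw [Fintype.linearIndependent_iff]
  induction τ with
  | zero =>
    intro g hg s
    simp only [sqfDiv, Finset.univ_eq_empty, Finset.prod_empty, Nat.cast_one, Real.sqrt_one,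
      Fintype.sum_unique, Rat.smul_one_eq_cast, Rat.cast_eq_zero] at hg
    convert hg using 2
  | succ τ ih =>
    intro g hg
    set K := primeSqrtField τ
    set A := ∑ t, g (Fin.snoc t false) • √(sqfDiv τ t : ℝ)
    set B := ∑ t, g (Fin.snoc t true) • √(sqfDiv τ t : ℝ)
    have hAB : A + B * √(nthPrime τ : ℝ) = 0 := by
      rw [← hg, Fin.sum_bool_tuple_succ, Finset.sum_mul, ← Finset.sum_add_distrib]
      simp [sqrt_sqfDiv_snoc]
    have hmem : ∀ h : (Fin τ → Bool) → ℚ, ∑ t, h t • √(sqfDiv τ t : ℝ) ∈ K := fun h =>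
      sum_mem fun t _ => SubfieldClass.qsmul_mem K _ (sqrt_sqfDiv_mem_primeSqrtField t)
    have hB : B = 0 := by
      by_contra hB
      refine sqrt_nthPrime_notMem_primeSqrtField τ ?_
      rw [show √(nthPrime τ : ℝ) = -A / B by field_simp; linear_combination hAB]
      exact div_mem (neg_mem (hmem _)) (hmem _)
    have hA : A = 0 := by simpa [hB] using hAB
    intro s
    rw [← Fin.snoc_init_self s]
    cases s (Fin.last τ)
    · exact ih _ hA _
    · exact ih _ hB _

variable (τ) in
noncomputable def sqrtComb : ((Fin τ → Bool) → ℤ) →ₗ[ℤ] ℝ :=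
  Fintype.linearCombination ℤ fun s => √(sqfDiv τ s : ℝ)

theorem sqrtComb_apply (c : (Fin τ → Bool) → ℤ) :
    sqrtComb τ c = ∑ s, (c s : ℝ) * √(sqfDiv τ s : ℝ) := by
  simp [sqrtComb, Fintype.linearCombination_apply, zsmul_eq_mul]

theorem sqrtComb_single (s : Fin τ → Bool) (a : ℤ) :
    sqrtComb τ (Pi.single s a) = a * √(sqfDiv τ s : ℝ) := by
  simp [sqrtComb, Fintype.linearCombination_apply_single, zsmul_eq_mul]

theorem sqrtComb_single_false (a : ℤ) : sqrtComb τ (Pi.single (fun _ => false) a) = a := by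
  simp [sqrtComb_single, sqfDiv]

variable (τ) in
theorem sqrtComb_injective : Function.Injective (sqrtComb τ) :=
  ((linearIndependent_sqrt_sqfDiv τ).restrict_scalars' ℤ).fintypeLinearCombination_injective

variable (τ) in
noncomputable def sqrtSum : ℝ := ∑ s : Fin τ → Bool, √(sqfDiv τ s : ℝ)

variable (τ) in
theorem one_le_sqrtSum : 1 ≤ sqrtSum τ := by
  calc (1 : ℝ) = √(sqfDiv τ fun _ => false : ℝ) := by simp [sqfDiv]
    _ ≤ sqrtSum τ := Finset.single_le_sum (f := fun s => √(sqfDiv τ s : ℝ))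
        (fun s _ => Real.sqrt_nonneg _) (Finset.mem_univ _)

theorem abs_sqrtComb_le {c : (Fin τ → Bool) → ℤ} {N : ℝ} (hc : ∀ s, |(c s : ℝ)| ≤ N) :
    |sqrtComb τ c| ≤ N * sqrtSum τ := by
  rw [sqrtComb_apply, sqrtSum, Finset.mul_sum]
  refine (Finset.abs_sum_le_sum_abs _ _).trans (Finset.sum_le_sum fun s _ => ?_)
  rw [abs_mul, abs_of_nonneg (Real.sqrt_nonneg _)]
  exact mul_le_mul_of_nonneg_right (hc s) (Real.sqrt_nonneg _)

def conjSign (ε s : Fin τ → Bool) : ℤ := ∏ j, if ε j && s j then -1 else 1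

theorem abs_conjSign (ε s : Fin τ → Bool) : |conjSign ε s| = 1 := by
  rw [conjSign, Finset.abs_prod]
  exact Finset.prod_eq_one fun j _ => by split_ifs <;> simp

theorem conjSign_false_left (s : Fin τ → Bool) : conjSign (fun _ => false) s = 1 := by
  simp [conjSign]

theorem conjSign_mul_conjSign (ε s t : Fin τ → Bool) :
    conjSign ε s * conjSign ε t = conjSign ε fun j => xor (s j) (t j) := by
  rw [conjSign, conjSign, conjSign, ← Finset.prod_mul_distrib]
  refine Finset.prod_congr rfl fun j _ => ?_
  cases ε j <;> cases s j <;> cases t j <;> simp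

theorem conjSign_snoc (ε t : Fin τ → Bool) (b b' : Bool) :
    conjSign (Fin.snoc ε b) (Fin.snoc t b' : Fin (τ + 1) → Bool) =
      conjSign ε t * if b && b' then -1 else 1 := by
  simp [conjSign, Fin.prod_univ_castSucc]

theorem sqfDiv_mul_sqfDiv (s t : Fin τ → Bool) :
    sqfDiv τ s * sqfDiv τ t =
      sqfDiv τ (fun j => s j && t j) ^ 2 * sqfDiv τ fun j => xor (s j) (t j) := by
  rw [sqfDiv, sqfDiv, sqfDiv, sqfDiv, ← Finset.prod_pow, ← Finset.prod_mul_distrib,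
    ← Finset.prod_mul_distrib]
  refine Finset.prod_congr rfl fun j _ => ?_
  cases s j <;> cases t j <;> simp [sq]

theorem sqrt_sqfDiv_mul_sqrt_sqfDiv (s t : Fin τ → Bool) :
    √(sqfDiv τ s : ℝ) * √(sqfDiv τ t : ℝ) =
      sqfDiv τ (fun j => s j && t j) * √(sqfDiv τ fun j => xor (s j) (t j) : ℝ) := by
  rw [← Real.sqrt_mul (Nat.cast_nonneg _), ← Nat.cast_mul, sqfDiv_mul_sqfDiv, Nat.cast_mul,
    Nat.cast_pow, Real.sqrt_mul (sq_nonneg _), Real.sqrt_sq (Nat.cast_nonneg _)]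

variable (τ) in
/-- The images of `∑ c_s √(sqfDiv s)` under the `2 ^ τ` field automorphisms `√p_j ↦ ±√p_j`;
the sign at `ε` is `-` exactly for the `j` with `ε j`. -/
noncomputable def conjugates : ((Fin τ → Bool) → ℤ) →ₗ[ℤ] (Fin τ → Bool) → ℝ where
  toFun c ε := sqrtComb τ (conjSign ε * c)
  map_add' c d := by ext ε; simp [mul_add]
  map_smul' k c := by
    ext ε
    exact (congrArg (sqrtComb τ) (mul_smul_comm k _ c)).trans (map_zsmul _ k _)

theorem conjugates_apply (c : (Fin τ → Bool) → ℤ) (ε : Fin τ → Bool) :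
    conjugates τ c ε = sqrtComb τ (conjSign ε * c) := rfl

theorem conjugates_false (c : (Fin τ → Bool) → ℤ) :
    conjugates τ c (fun _ => false) = sqrtComb τ c := by
  rw [conjugates_apply, show conjSign (fun _ => false) = 1 from funext conjSign_false_left,
    one_mul]

theorem conjugates_ne_zero {c : (Fin τ → Bool) → ℤ} (hc : c ≠ 0) (ε : Fin τ → Bool) :
    conjugates τ c ε ≠ 0 := by
  rw [conjugates_apply, ← map_zero (sqrtComb τ), (sqrtComb_injective τ).ne_iff]
  refine fun h => hc (funext fun s => ?_)
  have := congrFun h s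
  simp only [Pi.mul_apply, Pi.zero_apply, mul_eq_zero] at this
  exact this.resolve_left fun h0 => by simpa [h0] using abs_conjSign ε s

theorem abs_conjugates_le {c : (Fin τ → Bool) → ℤ} {N : ℝ} (hc : ∀ s, |(c s : ℝ)| ≤ N)
    (ε : Fin τ → Bool) : |conjugates τ c ε| ≤ N * sqrtSum τ := by
  refine abs_sqrtComb_le fun s => ?_
  simpa [abs_mul, ← Int.cast_abs, abs_conjSign] using hc s

theorem conjugates_single_mul_conjugates_single (s t : Fin τ → Bool) (a b : ℤ) :
    conjugates τ (Pi.single s a) * conjugates τ (Pi.single t b) =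
      conjugates τ
        (Pi.single (fun j => xor (s j) (t j)) (a * b * sqfDiv τ fun j => s j && t j)) := by
  ext ε
  simp only [Pi.mul_apply, conjugates_apply, ← Pi.single_mul_right, sqrtComb_single]
  rw [← conjSign_mul_conjSign]
  push_cast
  linear_combination (conjSign ε s * a * conjSign ε t * b : ℝ) * sqrt_sqfDiv_mul_sqrt_sqfDiv s t

theorem mul_mem_range_conjugates {x y : (Fin τ → Bool) → ℝ}
    (hx : x ∈ LinearMap.range (conjugates τ))
    (hy : y ∈ LinearMap.range (conjugates τ)) : x * y ∈ LinearMap.range (conjugates τ) := by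
  obtain ⟨c, rfl⟩ := hx
  obtain ⟨d, rfl⟩ := hy
  rw [← Finset.univ_sum_single c, ← Finset.univ_sum_single d, map_sum, map_sum,
    Finset.sum_mul_sum]
  exact sum_mem fun s _ => sum_mem fun t _ =>
    conjugates_single_mul_conjugates_single s t (c s) (d t) ▸ LinearMap.mem_range_self _ _

theorem conjugates_snoc (c : (Fin (τ + 1) → Bool) → ℤ) (ε : Fin τ → Bool) (b : Bool) :
    conjugates (τ + 1) c (Fin.snoc ε b) =
      conjugates τ (fun t => c (Fin.snoc t false)) ε +
        (if b then -1 else 1) * √(nthPrime τ : ℝ) *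
          conjugates τ (fun t => c (Fin.snoc t true)) ε := by
  simp only [conjugates_apply, sqrtComb_apply, Fin.sum_bool_tuple_succ, Pi.mul_apply,
    conjSign_snoc, sqrt_sqfDiv_snoc, Finset.mul_sum, ← Finset.sum_add_distrib]
  refine Finset.sum_congr rfl fun t _ => ?_
  cases b <;> simp <;> ring

theorem exists_prod_eq_intCast_of_mem_range_conjugates {x : (Fin τ → Bool) → ℝ}
    (hx : x ∈ LinearMap.range (conjugates τ)) : ∃ m : ℤ, ∏ ε, x ε = m := by
  induction τ with
  | zero =>
    obtain ⟨c, rfl⟩ := hx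
    refine ⟨c default, ?_⟩
    simp [conjugates_apply, sqrtComb_apply, sqfDiv, conjSign]
    exact congrArg c (Subsingleton.elim _ _)
  | succ τ ih =>
    obtain ⟨c, rfl⟩ := hx
    set A := conjugates τ fun t => c (Fin.snoc t false)
    set B := conjugates τ fun t => c (Fin.snoc t true)
    have hAB : A * A - (nthPrime τ : ℤ) • (B * B) ∈ LinearMap.range (conjugates τ) :=
      sub_mem (mul_mem_range_conjugates ⟨_, rfl⟩ ⟨_, rfl⟩)
        (Submodule.smul_mem _ _ (mul_mem_range_conjugates ⟨_, rfl⟩ ⟨_, rfl⟩))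
    obtain ⟨m, hm⟩ := ih hAB
    refine ⟨m, hm ▸ ?_⟩
    -- pairing `snoc ε false` with `snoc ε true` gives `(A + B √p) (A - B √p) = A ^ 2 - p B ^ 2`
    rw [Fin.prod_bool_tuple_succ]
    refine Finset.prod_congr rfl fun ε _ => ?_
    simp only [conjugates_snoc, Pi.sub_apply, Pi.mul_apply, zsmul_eq_mul]
    have hp : √(nthPrime τ : ℝ) ^ 2 = nthPrime τ := Real.sq_sqrt (Nat.cast_nonneg _)
    simp only [Bool.false_eq_true, ↓reduceIte, Int.cast_natCast]
    linear_combination (-(B ε * B ε)) * hp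

theorem one_le_abs_sqrtComb_mul_pow {c : (Fin τ → Bool) → ℤ} (hc : c ≠ 0) {N : ℝ}
    (hN : ∀ s, |(c s : ℝ)| ≤ N) : 1 ≤ |sqrtComb τ c| * (N * sqrtSum τ) ^ (2 ^ τ - 1) := by
  obtain ⟨m, hm⟩ :=
    exists_prod_eq_intCast_of_mem_range_conjugates (LinearMap.mem_range_self (conjugates τ) c)
  have hm0 : m ≠ 0 := by
    rintro rfl
    exact Finset.prod_ne_zero_iff.2 (fun ε _ => conjugates_ne_zero hc ε) (by simpa using hm)
  have hcard : (Finset.univ.erase fun _ : Fin τ => false).card = 2 ^ τ - 1 := by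
    simp [Finset.card_erase_of_mem]
  calc (1 : ℝ) ≤ |(m : ℝ)| := by exact_mod_cast Int.one_le_abs hm0
    _ = |conjugates τ c fun _ => false| *
        ∏ ε ∈ Finset.univ.erase fun _ => false, |conjugates τ c ε| := by
      rw [← hm, Finset.abs_prod]
      exact (Finset.mul_prod_erase _ _ (Finset.mem_univ _)).symm
    _ ≤ |sqrtComb τ c| * (N * sqrtSum τ) ^ (2 ^ τ - 1) := by
      rw [conjugates_false, ← hcard, ← Finset.prod_const]
      exact mul_le_mul_of_nonneg_left (Finset.prod_le_prod (fun _ _ => abs_nonneg _)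
        fun ε _ => abs_conjugates_le hN ε) (abs_nonneg _)

theorem inv_le_fract_sqrtComb {d : (Fin τ → Bool) → ℤ} {R : ℝ} (hR : 1 ≤ R)
    (hd : ∀ s, |(d s : ℝ)| ≤ R) (hpos : 0 < Int.fract (sqrtComb τ d)) :
    ((3 * sqrtSum τ ^ 2 * R) ^ (2 ^ τ - 1))⁻¹ ≤ Int.fract (sqrtComb τ d) := by
  set x := sqrtComb τ d
  set M := sqrtSum τ
  have hM := one_le_sqrtSum τ
  -- shifting the constant coefficient by `-⌊x⌋` realises `fract x` by a nonzero vector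
  set d' := d - Pi.single (fun _ => false) ⌊x⌋
  have hd'x : sqrtComb τ d' = Int.fract x := by
    rw [map_sub, sqrtComb_single_false, Int.fract]
  have hd'0 : d' ≠ 0 := by
    rintro h
    rw [h, map_zero] at hd'x
    exact hpos.ne hd'x
  have hfloor : |(⌊x⌋ : ℝ)| ≤ R * M + 1 := by
    have hx : |x| ≤ R * M := abs_sqrtComb_le hd
    rw [abs_le] at hx ⊢
    constructor <;> linarith [Int.floor_le x, Int.lt_floor_add_one x]
  have hd' : ∀ s, |(d' s : ℝ)| ≤ 3 * M * R := by
    intro s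
    have hsingle :
        |((Pi.single (fun _ => false) ⌊x⌋ : (Fin τ → Bool) → ℤ) s : ℝ)| ≤ |(⌊x⌋ : ℝ)| := by
      rcases eq_or_ne s (fun _ => false) with rfl | hs
      · simp
      · simp [hs]
    calc |(d' s : ℝ)| ≤ |(d s : ℝ)| + |(⌊x⌋ : ℝ)| := by
          simpa [d'] using (abs_sub _ _).trans (add_le_add le_rfl hsingle)
      _ ≤ 3 * M * R := by nlinarith [hd s]
  have h := one_le_abs_sqrtComb_mul_pow hd'0 hd'
  rw [hd'x, abs_of_nonneg (Int.fract_nonneg x)] at h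
  rw [inv_le_iff_one_le_mul₀ (by positivity)]
  calc (1 : ℝ) ≤ _ := h
    _ = _ := by ring

theorem exists_lt_sub_lt_inv_of_card_lt {ι : Type*} {S : Finset ι} {f : ι → ℝ}
    (hf : ∀ i ∈ S, f i ∈ Set.Ico 0 1) (hinj : Set.InjOn f S) {K : ℕ} (hK0 : 0 < K)
    (hK : K < S.card) : ∃ i ∈ S, ∃ j ∈ S, f i < f j ∧ f j - f i < (K : ℝ)⁻¹ := by
  have hmaps : ∀ i ∈ S, ⌊f i * K⌋₊ ∈ Finset.range K := fun i hi => by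
    rw [Finset.mem_range, Nat.floor_lt (mul_nonneg (hf i hi).1 K.cast_nonneg)]
    nlinarith [(hf i hi).2, (Nat.cast_pos (α := ℝ)).2 hK0]
  obtain ⟨i, hi, j, hj, hij, hfloor⟩ :=
    Finset.exists_ne_map_eq_of_card_lt_of_maps_to (by simpa using hK) hmaps
  have hK' : (0 : ℝ) < K := by exact_mod_cast hK0
  have hclose : |f i * K - f j * K| < 1 := by
    refine Int.abs_sub_lt_one_of_floor_eq_floor ?_
    rw [← Int.natCast_floor_eq_floor (mul_nonneg (hf i hi).1 hK'.le),
      ← Int.natCast_floor_eq_floor (mul_nonneg (hf j hj).1 hK'.le), hfloor]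
  rw [← sub_mul, abs_mul, abs_of_pos hK', ← lt_div_iff₀ hK', one_div] at hclose
  rcases lt_or_gt_of_ne (hinj.ne hi hj hij) with hlt | hlt
  · exact ⟨i, hi, j, hj, hlt, by rwa [abs_sub_comm, abs_of_pos (sub_pos.2 hlt)] at hclose⟩
  · exact ⟨j, hj, i, hi, hlt, by rwa [abs_of_pos (sub_pos.2 hlt)] at hclose⟩

theorem fract_sub_eq_sub_fract {a b : ℝ} (h : Int.fract b ≤ Int.fract a) :
    Int.fract (a - b) = Int.fract a - Int.fract b := by
  rw [Int.fract_eq_iff]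
  refine ⟨sub_nonneg.2 h, by linarith [Int.fract_lt_one a, Int.fract_nonneg b], ⌊a⌋ - ⌊b⌋, ?_⟩
  rw [Int.fract, Int.fract]
  push_cast
  ring

theorem eq_of_fract_sqrtComb_eq {g g' : (Fin τ → Bool) → ℤ}
    (h0 : g (fun _ => false) = g' (fun _ => false))
    (h : Int.fract (sqrtComb τ g) = Int.fract (sqrtComb τ g')) : g = g' := by
  obtain ⟨z, hz⟩ := Int.fract_eq_fract.1 h
  rw [← map_sub, ← sqrtComb_single_false z] at hz
  have hgg' := sqrtComb_injective τ hz
  funext s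
  rcases eq_or_ne s (fun _ => false) with rfl | hs
  · exact h0
  · simpa [hs, sub_eq_zero] using congrFun hgg' s

variable (τ) in
noncomputable def coeffBox (N : ℕ) : Finset ((Fin τ → Bool) → ℤ) :=
  Fintype.piFinset fun s => if s = (fun _ => false) then {0} else Finset.Icc 0 (N : ℤ)

theorem mem_coeffBox {N : ℕ} {g : (Fin τ → Bool) → ℤ} (hg : g ∈ coeffBox τ N) :
    g (fun _ => false) = 0 ∧ ∀ s, 0 ≤ g s ∧ g s ≤ N := by
  simp only [coeffBox, Fintype.mem_piFinset] at hg
  refine ⟨by simpa using hg (fun _ => false), fun s => ?_⟩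
  have := hg s
  split_ifs at this
  · simp_all
  · simpa using this

theorem card_coeffBox (N : ℕ) : (coeffBox τ N).card = (N + 1) ^ (2 ^ τ - 1) := by
  rw [coeffBox, Fintype.card_piFinset]
  simp [apply_ite Finset.card, Finset.prod_ite, Finset.filter_ne', Finset.card_erase_of_mem]

theorem exists_fract_sqrtComb_pos_le (hτ : τ ≠ 0) {N : ℕ} (hN : 0 < N) :
    ∃ d : (Fin τ → Bool) → ℤ, d (fun _ => false) = 0 ∧ (∀ s, |d s| ≤ N) ∧
      0 < Int.fract (sqrtComb τ d) ∧ Int.fract (sqrtComb τ d) ≤ ((N : ℝ) ^ (2 ^ τ - 1))⁻¹ := by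
  set D := 2 ^ τ - 1
  have hD : 0 < D := Nat.sub_pos_of_lt (Nat.one_lt_two_pow hτ)
  have hK0 : 0 < (N + 1) ^ D - 1 := Nat.sub_pos_of_lt (Nat.one_lt_pow hD.ne' (by omega))
  have hNK : N ^ D ≤ (N + 1) ^ D - 1 :=
    Nat.le_sub_one_of_lt (Nat.pow_lt_pow_left N.lt_succ_self hD.ne')
  have hinj : Set.InjOn (fun g => Int.fract (sqrtComb τ g)) (coeffBox τ N) :=
    fun g hg g' hg' h =>
      eq_of_fract_sqrtComb_eq ((mem_coeffBox hg).1.trans (mem_coeffBox hg').1.symm) h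
  obtain ⟨g, hg, g', hg', hlt, hclose⟩ := exists_lt_sub_lt_inv_of_card_lt
    (fun g _ => ⟨Int.fract_nonneg _, Int.fract_lt_one _⟩) hinj hK0
    (by rw [card_coeffBox]; exact Nat.sub_lt (by positivity) one_pos)
  have hfract : Int.fract (sqrtComb τ (g' - g)) =
      Int.fract (sqrtComb τ g') - Int.fract (sqrtComb τ g) := by
    rw [map_sub, fract_sub_eq_sub_fract hlt.le]
  refine ⟨g' - g, by simp [(mem_coeffBox hg).1, (mem_coeffBox hg').1], fun s => ?_, ?_, ?_⟩
  · have := (mem_coeffBox hg).2 s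
    have := (mem_coeffBox hg').2 s
    rw [Pi.sub_apply, abs_le]
    constructor <;> linarith
  · rw [hfract]
    exact sub_pos.2 hlt
  · rw [hfract]
    refine hclose.le.trans (inv_anti₀ (by positivity) ?_)
    exact_mod_cast hNK

end Tuples

theorem fract_sum_natCast_mul_of_lt_one {ι : Type*} (S : Finset ι) (m : ι → ℕ) (x : ι → ℝ)
    (h : ∑ i ∈ S, m i * Int.fract (x i) < 1) :
    Int.fract (∑ i ∈ S, m i * x i) = ∑ i ∈ S, m i * Int.fract (x i) := by
  rw [Int.fract_eq_iff]
  refine ⟨Finset.sum_nonneg fun i _ => mul_nonneg (Nat.cast_nonneg _) (Int.fract_nonneg _), h,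
    ∑ i ∈ S, m i * ⌊x i⌋, ?_⟩
  simp only [Int.fract, ← Finset.sum_sub_distrib]
  push_cast
  exact Finset.sum_congr rfl fun i _ => by ring

theorem abs_sum_nsmul_apply_le {ι : Type*} {d : ℕ → ι → ℤ} {m : ℕ → ℕ} {K : ℕ}
    (hm : ∀ j, m j ≤ K) (hd : ∀ j s, |d j s| ≤ 2 ^ j) (J : ℕ) (s : ι) :
    |(∑ j ∈ Finset.range J, m j • d j) s| ≤ K * 2 ^ J := by
  calc |(∑ j ∈ Finset.range J, m j • d j) s| ≤ ∑ j ∈ Finset.range J, (K * 2 ^ j : ℤ) := by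
        rw [Finset.sum_apply]
        refine (Finset.abs_sum_le_sum_abs _ _).trans (Finset.sum_le_sum fun j _ => ?_)
        rw [Pi.smul_apply, nsmul_eq_mul, abs_mul, Nat.abs_cast]
        exact mul_le_mul (by exact_mod_cast hm j) (hd j s) (abs_nonneg _) (Nat.cast_nonneg _)
    _ ≤ K * 2 ^ J := by
        rw [← Finset.mul_sum]
        gcongr
        exact_mod_cast (Nat.geomSum_lt le_rfl fun k hk => Finset.mem_range.1 hk).le

section Greedy

variable (θ : ℕ → ℝ) (α : ℝ)

noncomputable def greedyRem : ℕ → ℝ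
  | 0 => α
  | j + 1 => greedyRem j - ⌊greedyRem j / θ j⌋₊ * θ j

noncomputable def greedyDigit (j : ℕ) : ℕ := ⌊greedyRem θ α j / θ j⌋₊

theorem greedyRem_succ (j : ℕ) :
    greedyRem θ α (j + 1) = greedyRem θ α j - greedyDigit θ α j * θ j := rfl

theorem sum_greedyDigit_mul (J : ℕ) :
    ∑ j ∈ Finset.range J, greedyDigit θ α j * θ j = α - greedyRem θ α J := by
  induction J with
  | zero => simp [greedyRem]
  | succ J ih => rw [Finset.sum_range_succ, ih, greedyRem_succ]; ring

variable {θ α}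

theorem greedyDigit_mul_le {j : ℕ} (hθ : 0 < θ j) (hrem : 0 ≤ greedyRem θ α j) :
    greedyDigit θ α j * θ j ≤ greedyRem θ α j :=
  (le_div_iff₀ hθ).1 (Nat.floor_le (div_nonneg hrem hθ.le))

theorem greedyRem_nonneg (hθ : ∀ j, 0 < θ j) (hα : 0 ≤ α) (j : ℕ) : 0 ≤ greedyRem θ α j := by
  induction j with
  | zero => exact hα
  | succ j ih => exact sub_nonneg.2 (greedyDigit_mul_le (hθ j) ih)

theorem greedyRem_succ_lt {j : ℕ} (hθ : 0 < θ j) : greedyRem θ α (j + 1) < θ j := by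
  have h := (div_lt_iff₀ hθ).1 (Nat.lt_floor_add_one (greedyRem θ α j / θ j))
  rw [greedyRem_succ, greedyDigit]
  linarith

theorem greedyDigit_le {D : ℕ} {C : ℝ} (hC : 0 < C) (hθ : ∀ j, 0 < θ j)
    (hup : ∀ j, θ j ≤ (((2 : ℝ) ^ j) ^ D)⁻¹) (hlow : ∀ j, ((C * 2 ^ j) ^ D)⁻¹ ≤ θ j)
    (hα0 : 0 ≤ α) (hα1 : α < 1) (j : ℕ) : (greedyDigit θ α j : ℝ) ≤ (2 * C) ^ D := by
  have hrem : greedyRem θ α j ≤ 2 ^ D * (((2 : ℝ) ^ j) ^ D)⁻¹ := by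
    cases j with
    | zero => simpa [greedyRem] using hα1.le.trans (one_le_pow₀ one_le_two)
    | succ j =>
      refine (greedyRem_succ_lt (hθ j)).le.trans ((hup j).trans_eq ?_)
      field_simp
      ring
  have hθinv : (θ j)⁻¹ ≤ (C * 2 ^ j) ^ D := by
    simpa using inv_anti₀ (by positivity) (hlow j)
  calc (greedyDigit θ α j : ℝ) ≤ greedyRem θ α j * (θ j)⁻¹ :=
        Nat.floor_le (div_nonneg (greedyRem_nonneg hθ hα0 j) (hθ j).le)
    _ ≤ 2 ^ D * (((2 : ℝ) ^ j) ^ D)⁻¹ * (C * 2 ^ j) ^ D :=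
        mul_le_mul hrem hθinv (inv_nonneg.2 (hθ j).le) (by positivity)
    _ = (2 * C) ^ D := by field_simp; ring

end Greedy

theorem exists_dyadic_approx {τ : ℕ} (hτ : τ ≠ 0) :
    ∃ K : ℕ, 0 < K ∧ ∀ α : ℝ, 0 ≤ α → α < 1 → ∀ J : ℕ, ∃ c : (Fin τ → Bool) → ℤ,
      c (fun _ => false) = 0 ∧ (∀ s, |c s| ≤ K * 2 ^ (J + 1)) ∧
      0 ≤ α - Int.fract (sqrtComb τ c) ∧
      α - Int.fract (sqrtComb τ c) ≤ (((2 : ℝ) ^ J) ^ (2 ^ τ - 1))⁻¹ := by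
  choose d hd0 hdN hθpos hθup using fun j : ℕ =>
    exists_fract_sqrtComb_pos_le hτ (N := 2 ^ j) (by positivity)
  set θ := fun j => Int.fract (sqrtComb τ (d j))
  set C := 3 * sqrtSum τ ^ 2
  have hC : 0 < C := by have := one_le_sqrtSum τ; positivity
  have hθlow : ∀ j, ((C * 2 ^ j) ^ (2 ^ τ - 1))⁻¹ ≤ θ j := fun j =>
    inv_le_fract_sqrtComb (one_le_pow₀ one_le_two) (fun s => by exact_mod_cast hdN j s) (hθpos j)
  refine ⟨⌈(2 * C) ^ (2 ^ τ - 1)⌉₊, Nat.ceil_pos.2 (by positivity), fun α hα0 hα1 J => ?_⟩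
  have hdigit : ∀ j, greedyDigit θ α j ≤ ⌈(2 * C) ^ (2 ^ τ - 1)⌉₊ := fun j =>
    Nat.cast_le.1 ((greedyDigit_le hC hθpos (by exact_mod_cast hθup) hθlow hα0 hα1 j).trans
      (Nat.le_ceil _))
  have hsum := sum_greedyDigit_mul θ α (J + 1)
  have hrem := greedyRem_nonneg hθpos hα0 (J + 1)
  have hfract : Int.fract (sqrtComb τ (∑ j ∈ Finset.range (J + 1), greedyDigit θ α j • d j)) =
      α - greedyRem θ α (J + 1) := by
    simp_rw [map_sum, map_nsmul, nsmul_eq_mul]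
    rw [fract_sum_natCast_mul_of_lt_one _ _ _ (by linarith), hsum]
  refine ⟨∑ j ∈ Finset.range (J + 1), greedyDigit θ α j • d j, by simp [hd0],
    abs_sum_nsmul_apply_le hdigit (fun j s => by exact_mod_cast hdN j s) (J + 1),
    by rw [hfract]; linarith, ?_⟩
  rw [hfract, sub_sub_cancel]
  exact (greedyRem_succ_lt (hθpos J)).le.trans (by exact_mod_cast hθup J)

theorem exists_dyadic_scale {K n : ℕ} (hK : 0 < K) (hn : 2 * K ≤ n) :
    ∃ J : ℕ, K * 2 ^ (J + 1) ≤ n ∧ n < 4 * K * 2 ^ J := by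
  have hq : n / (2 * K) ≠ 0 := (Nat.div_pos hn (by omega)).ne'
  refine ⟨Nat.log 2 (n / (2 * K)), ?_, ?_⟩
  · have := Nat.pow_log_le_self 2 hq
    rw [Nat.le_div_iff_mul_le (by omega)] at this
    rw [pow_succ]
    linarith
  · have h1 := Nat.lt_pow_succ_log_self one_lt_two (n / (2 * K))
    have h2 := Nat.lt_mul_div_succ n (show 0 < 2 * K by omega)
    rw [pow_succ] at h1
    nlinarith

theorem stmt_14 (τ : ℕ) :
    ∃ C : ℝ, ∀ α : ℝ, 0 ≤ α → α < 1 → ∀ n : ℕ, 1 ≤ n →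
      ∃ c : (Fin τ → Bool) → ℤ,
        c (fun _ => false) = 0 ∧ (∀ s, |c s| ≤ (n : ℤ)) ∧
        0 ≤ α - Int.fract (∑ s, (c s : ℝ) * Real.sqrt (sqfDiv τ s)) ∧
        α - Int.fract (∑ s, (c s : ℝ) * Real.sqrt (sqfDiv τ s)) ≤
          C * (n : ℝ) ^ (-(2 ^ τ - 1 : ℤ)) := by
  simp_rw [← sqrtComb_apply]
  obtain rfl | hτ := eq_or_ne τ 0
  · exact ⟨1, fun α hα0 hα1 n _ => ⟨0, rfl, by simp, by simpa using hα0, by simpa using hα1.le⟩⟩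
  obtain ⟨K, hK0, hK⟩ := exists_dyadic_approx hτ
  refine ⟨(4 * K : ℝ) ^ (2 ^ τ - 1), fun α hα0 hα1 n hn => ?_⟩
  have hexp : (-(2 ^ τ - 1 : ℤ)) = -((2 ^ τ - 1 : ℕ) : ℤ) := by
    rw [Nat.cast_sub Nat.one_le_two_pow]
    push_cast
    ring
  rw [hexp, zpow_neg, zpow_natCast, ← div_eq_mul_inv, ← div_pow]
  rcases lt_or_ge n (2 * K) with hsmall | hlarge
  · refine ⟨0, rfl, by simp, by simpa using hα0, ?_⟩
    simp only [map_zero, Int.fract_zero, sub_zero]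
    refine hα1.le.trans (one_le_pow₀ ((one_le_div (by positivity)).2 ?_))
    exact_mod_cast (by omega : n ≤ 4 * K)
  obtain ⟨J, hJn, hnJ⟩ := exists_dyadic_scale hK0 hlarge
  obtain ⟨c, hc0, hcn, hlow, hup⟩ := hK α hα0 hα1 J
  refine ⟨c, hc0, fun s => (hcn s).trans (by exact_mod_cast hJn), hlow, hup.trans ?_⟩
  rw [← inv_pow, ← one_div]
  gcongr ?_ ^ _
  rw [div_le_div_iff₀ (by positivity) (by positivity), one_mul]
  exact_mod_cast (by linarith : n ≤ 4 * K * 2 ^ J)
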